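/- arXiv:2505.13163 — 4 statements merged into one kernel-verified Lean document; each statement's English description precedes it below -/
import Mathlib

section
/- Let e₁, e₂, e₃, e₄ denote the elementary symmetric polynomials in m₀, m₁, m₂, m₃ and define Δ₃ = e₁⁴ − 8e₁²e₂ + 16e₂² − 64e₄. Then Δ₃((t₁+t₂+t₃)², t₁², t₂², t₃²) = 0 identically as a polynomial in t₁, t₂, t₃. That is, the rational map [t₁:t₂:t₃] ↦ [(t₁+t₂+t₃)² : t₁² : t₂² : t₃²] lands in the projective hypersurface Δ₃ = 0. -/
/-- Let `e₁, e₂, e₃, e₄` be the elementary symmetric polynomials in `m₀, m₁, m₂, m₃` and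
`Δ₃ = e₁⁴ − 8e₁²e₂ + 16e₂² − 64e₄`.  Then `Δ₃((t₁+t₂+t₃)², t₁², t₂², t₃²) = 0`
identically: the rational map `[t₁:t₂:t₃] ↦ [(t₁+t₂+t₃)² : t₁² : t₂² : t₃²]` lands in
the hypersurface `Δ₃ = 0`.  (Stated over an arbitrary commutative ring, which is
equivalent to the polynomial identity.) -/
theorem stmt_10 (R : Type*) [CommRing R] (t1 t2 t3 : R) :
    let m0 := (t1 + t2 + t3) ^ 2
    let m1 := t1 ^ 2
    let m2 := t2 ^ 2
    let m3 := t3 ^ 2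
    let e1 := m0 + m1 + m2 + m3
    let e2 := m0 * m1 + m0 * m2 + m0 * m3 + m1 * m2 + m1 * m3 + m2 * m3
    let e4 := m0 * m1 * m2 * m3
    e1 ^ 4 - 8 * e1 ^ 2 * e2 + 16 * e2 ^ 2 - 64 * e4 = 0 := by
  simp only []; ring
end

section
/- Let e₁,…,e₅ denote the elementary symmetric polynomials in m₀,…,m₄ and define Δ₄ = e₁⁸ − 16e₁⁶e₂ + 96e₁⁴e₂² − 128e₁⁴e₄ − 2048e₁³e₅ − 256e₁²e₂³ + 1024e₁²e₂e₄ + 8192e₁e₂e₅ + 256e₂⁴ − 2048e₂²e₄ − 16384e₃e₅ + 4096e₄². Then Δ₄((t₁+t₂+t₃+t₄)², t₁², t₂², t₃², t₄²) = 0 identically as a polynomial in t₁,…,t₄. -/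
private lemma delta4_aux {R : Type*} [CommRing R] (s q r w : R) :
    (2*s^2 - 2*q) ^ 8 - 16 * (2*s^2 - 2*q) ^ 6 * (s^2*(s^2-2*q) + q^2 - 2*s*r + 2*w)
      + 96 * (2*s^2 - 2*q) ^ 4 * (s^2*(s^2-2*q) + q^2 - 2*s*r + 2*w) ^ 2
      - 128 * (2*s^2 - 2*q) ^ 4 * (s^2*(r^2-2*q*w) + w^2)
      - 2048 * (2*s^2 - 2*q) ^ 3 * (s^2*w^2)
      - 256 * (2*s^2 - 2*q) ^ 2 * (s^2*(s^2-2*q) + q^2 - 2*s*r + 2*w) ^ 3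
      + 1024 * (2*s^2 - 2*q) ^ 2 * (s^2*(s^2-2*q) + q^2 - 2*s*r + 2*w) * (s^2*(r^2-2*q*w) + w^2)
      + 8192 * (2*s^2 - 2*q) * (s^2*(s^2-2*q) + q^2 - 2*s*r + 2*w) * (s^2*w^2)
      + 256 * (s^2*(s^2-2*q) + q^2 - 2*s*r + 2*w) ^ 4
      - 2048 * (s^2*(s^2-2*q) + q^2 - 2*s*r + 2*w) ^ 2 * (s^2*(r^2-2*q*w) + w^2)
      - 16384 * (s^2*(q^2-2*s*r+2*w) + r^2 - 2*q*w) * (s^2*w^2)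
      + 4096 * (s^2*(r^2-2*q*w) + w^2) ^ 2 = 0 := by
  ring

/-- Let `e₁,…,e₅` be the elementary symmetric polynomials in `m₀,…,m₄` and
`Δ₄ = e₁⁸ − 16e₁⁶e₂ + 96e₁⁴e₂² − 128e₁⁴e₄ − 2048e₁³e₅ − 256e₁²e₂³ + 1024e₁²e₂e₄
+ 8192e₁e₂e₅ + 256e₂⁴ − 2048e₂²e₄ − 16384e₃e₅ + 4096e₄²`.
Then `Δ₄((t₁+t₂+t₃+t₄)², t₁², t₂², t₃², t₄²) = 0` identically as a polynomial in
`t₁,…,t₄` (stated over an arbitrary commutative ring). -/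
theorem stmt_11 (R : Type*) [CommRing R] (t1 t2 t3 t4 : R) :
    let m : Fin 5 → R := ![(t1 + t2 + t3 + t4) ^ 2, t1 ^ 2, t2 ^ 2, t3 ^ 2, t4 ^ 2]
    let e : ℕ → R := fun k =>
      ∑ s ∈ Finset.univ.powersetCard k, ∏ i ∈ s, m i
    e 1 ^ 8 - 16 * e 1 ^ 6 * e 2 + 96 * e 1 ^ 4 * e 2 ^ 2 - 128 * e 1 ^ 4 * e 4
      - 2048 * e 1 ^ 3 * e 5 - 256 * e 1 ^ 2 * e 2 ^ 3 + 1024 * e 1 ^ 2 * e 2 * e 4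
      + 8192 * e 1 * e 2 * e 5 + 256 * e 2 ^ 4 - 2048 * e 2 ^ 2 * e 4
      - 16384 * e 3 * e 5 + 4096 * e 4 ^ 2 = 0 := by
  intro m e
  set s : R := t1 + t2 + t3 + t4 with hs
  set q : R := t1*t2 + t1*t3 + t1*t4 + t2*t3 + t2*t4 + t3*t4 with hq
  set r : R := t1*t2*t3 + t1*t2*t4 + t1*t3*t4 + t2*t3*t4 with hr
  set w : R := t1*t2*t3*t4 with hw
  have hm : ∀ i, m i = ![s ^ 2, t1 ^ 2, t2 ^ 2, t3 ^ 2, t4 ^ 2] i := by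
    intro i; fin_cases i <;> simp [m, hs]
  have h1 : e 1 = 2*s^2 - 2*q := by
    show ∑ u ∈ (Finset.univ.powersetCard 1 : Finset (Finset (Fin 5))), ∏ i ∈ u, m i = _
    rw [show (Finset.univ.powersetCard 1 : Finset (Finset (Fin 5))) =
      {{0},{1},{2},{3},{4}} from by decide]
    simp (config := {decide := true}) [Finset.sum_insert, Finset.sum_singleton,
      Finset.prod_singleton, hm 0, hm 1, hm 2, hm 3, hm 4]
    try simp only [Matrix.cons_val_zero, Matrix.cons_val_one, Matrix.head_cons,
      Matrix.cons_val_two, Matrix.tail_cons, Matrix.cons_val_three, Matrix.cons_val_four]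
    rw [hs, hq]; ring
  have h2 : e 2 = s^2*(s^2-2*q) + q^2 - 2*s*r + 2*w := by
    show ∑ u ∈ (Finset.univ.powersetCard 2 : Finset (Finset (Fin 5))), ∏ i ∈ u, m i = _
    rw [show (Finset.univ.powersetCard 2 : Finset (Finset (Fin 5))) =
      {{0,1},{0,2},{0,3},{0,4},{1,2},{1,3},{1,4},{2,3},{2,4},{3,4}} from by decide]
    simp (config := {decide := true}) [Finset.sum_insert, Finset.sum_singleton,
      Finset.prod_insert, Finset.mem_singleton, Finset.mem_insert,
      Finset.prod_singleton, hm 0, hm 1, hm 2, hm 3, hm 4]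
    try simp only [Matrix.cons_val_zero, Matrix.cons_val_one, Matrix.head_cons,
      Matrix.cons_val_two, Matrix.tail_cons, Matrix.cons_val_three, Matrix.cons_val_four]
    rw [hs, hq, hr, hw]; ring
  have h3 : e 3 = s^2*(q^2-2*s*r+2*w) + r^2 - 2*q*w := by
    show ∑ u ∈ (Finset.univ.powersetCard 3 : Finset (Finset (Fin 5))), ∏ i ∈ u, m i = _
    rw [show (Finset.univ.powersetCard 3 : Finset (Finset (Fin 5))) =
      {{0,1,2},{0,1,3},{0,1,4},{0,2,3},{0,2,4},{0,3,4},{1,2,3},{1,2,4},{1,3,4},{2,3,4}}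
      from by decide]
    simp (config := {decide := true}) [Finset.sum_insert, Finset.sum_singleton,
      Finset.prod_insert, Finset.mem_singleton, Finset.mem_insert,
      Finset.prod_singleton, hm 0, hm 1, hm 2, hm 3, hm 4]
    try simp only [Matrix.cons_val_zero, Matrix.cons_val_one, Matrix.head_cons,
      Matrix.cons_val_two, Matrix.tail_cons, Matrix.cons_val_three, Matrix.cons_val_four]
    rw [hs, hq, hr, hw]; ring
  have h4 : e 4 = s^2*(r^2-2*q*w) + w^2 := by
    show ∑ u ∈ (Finset.univ.powersetCard 4 : Finset (Finset (Fin 5))), ∏ i ∈ u, m i = _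
    rw [show (Finset.univ.powersetCard 4 : Finset (Finset (Fin 5))) =
      {{0,1,2,3},{0,1,2,4},{0,1,3,4},{0,2,3,4},{1,2,3,4}} from by decide]
    simp (config := {decide := true}) [Finset.sum_insert, Finset.sum_singleton,
      Finset.prod_insert, Finset.mem_singleton, Finset.mem_insert,
      Finset.prod_singleton, hm 0, hm 1, hm 2, hm 3, hm 4]
    try simp only [Matrix.cons_val_zero, Matrix.cons_val_one, Matrix.head_cons,
      Matrix.cons_val_two, Matrix.tail_cons, Matrix.cons_val_three, Matrix.cons_val_four]
    rw [hs, hq, hr, hw]; ring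
  have h5 : e 5 = s^2*w^2 := by
    show ∑ u ∈ (Finset.univ.powersetCard 5 : Finset (Finset (Fin 5))), ∏ i ∈ u, m i = _
    rw [show (Finset.univ.powersetCard 5 : Finset (Finset (Fin 5))) =
      {{0,1,2,3,4}} from by decide]
    simp (config := {decide := true}) [Finset.sum_singleton,
      Finset.prod_insert, Finset.mem_singleton, Finset.mem_insert,
      Finset.prod_singleton, hm 0, hm 1, hm 2, hm 3, hm 4]
    try simp only [Matrix.cons_val_zero, Matrix.cons_val_one, Matrix.head_cons,
      Matrix.cons_val_two, Matrix.tail_cons, Matrix.cons_val_three, Matrix.cons_val_four]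
    rw [hs, hw]; ring
  rw [h1, h2, h3, h4, h5]
  exact delta4_aux s q r w
end

section
/- The projective dual variety of the hypersurface {[μ₀:μ₁:μ₂:μ₃] ∈ ℙ³ : μ₀μ₁μ₂ + μ₀μ₁μ₃ + μ₀μ₂μ₃ + μ₁μ₂μ₃ = 0} (the 'reciprocal hyperplane' 1/μ₀ + 1/μ₁ + 1/μ₂ + 1/μ₃ = 0 cleared of denominators) contains the vanishing locus of Δ₃ = e₁⁴ − 8e₁²e₂ + 16e₂² − 64e₄, where e_i are elementary symmetric polynomials in the dual coordinates m₀,…,m₃. Concretely: at every smooth point [μ] of the hypersurface, the gradient vector (∂F/∂μ₀, …, ∂F/∂μ₃) of F = μ₀μ₁μ₂ + μ₀μ₁μ₃ + μ₀μ₂μ₃ + μ₁μ₂μ₃ satisfies Δ₃(∂F/∂μ₀, …, ∂F/∂μ₃) = 0 whenever F(μ) = 0. -/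
/-- Let `F = μ₀μ₁μ₂ + μ₀μ₁μ₃ + μ₀μ₂μ₃ + μ₁μ₂μ₃` be the "reciprocal hyperplane"
`1/μ₀ + ⋯ + 1/μ₃ = 0` with denominators cleared.  Wherever `F` vanishes, the
gradient `(∂F/∂μ₀, …, ∂F/∂μ₃)` satisfies `Δ₃(∇F) = 0`, where
`Δ₃ = e₁⁴ − 8e₁²e₂ + 16e₂² − 64e₄` in elementary symmetric polynomials of the four
arguments.  In particular the projective dual of `{F = 0}` is contained in `{Δ₃ = 0}`. -/
theorem stmt_12 (μ0 μ1 μ2 μ3 : ℂ)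
    (hF : μ0 * μ1 * μ2 + μ0 * μ1 * μ3 + μ0 * μ2 * μ3 + μ1 * μ2 * μ3 = 0) :
    let m0 := μ1 * μ2 + μ1 * μ3 + μ2 * μ3   -- ∂F/∂μ₀
    let m1 := μ0 * μ2 + μ0 * μ3 + μ2 * μ3   -- ∂F/∂μ₁
    let m2 := μ0 * μ1 + μ0 * μ3 + μ1 * μ3   -- ∂F/∂μ₂
    let m3 := μ0 * μ1 + μ0 * μ2 + μ1 * μ2   -- ∂F/∂μ₃
    let e1 := m0 + m1 + m2 + m3
    let e2 := m0 * m1 + m0 * m2 + m0 * m3 + m1 * m2 + m1 * m3 + m2 * m3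
    let e4 := m0 * m1 * m2 * m3
    e1 ^ 4 - 8 * e1 ^ 2 * e2 + 16 * e2 ^ 2 - 64 * e4 = 0 := by
  intro m0 m1 m2 m3 e1 e2 e4
  simp only [m0, m1, m2, m3, e1, e2, e4]
  linear_combination ((16) * μ1 * μ2 * μ3 ^ 3 + (-32) * μ1 * μ2 ^ 2 * μ3 ^ 2 + (16) * μ1 * μ2 ^ 3 * μ3 + (-32) * μ1 ^ 2 * μ2 * μ3 ^ 2 + (-32) * μ1 ^ 2 * μ2 ^ 2 * μ3 + (16) * μ1 ^ 3 * μ2 * μ3 + (16) * μ0 * μ2 * μ3 ^ 3 + (-32) * μ0 * μ2 ^ 2 * μ3 ^ 2 + (16) * μ0 * μ2 ^ 3 * μ3 + (16) * μ0 * μ1 * μ3 ^ 3 + (48) * μ0 * μ1 * μ2 * μ3 ^ 2 + (48) * μ0 * μ1 * μ2 ^ 2 * μ3 + (16) * μ0 * μ1 * μ2 ^ 3 + (-32) * μ0 * μ1 ^ 2 * μ3 ^ 2 + (48) * μ0 * μ1 ^ 2 * μ2 * μ3 + (-32) * μ0 * μ1 ^ 2 * μ2 ^ 2 + (16) * μ0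 * μ1 ^ 3 * μ3 + (16) * μ0 * μ1 ^ 3 * μ2 + (-32) * μ0 ^ 2 * μ2 * μ3 ^ 2 + (-32) * μ0 ^ 2 * μ2 ^ 2 * μ3 + (-32) * μ0 ^ 2 * μ1 * μ3 ^ 2 + (48) * μ0 ^ 2 * μ1 * μ2 * μ3 + (-32) * μ0 ^ 2 * μ1 * μ2 ^ 2 + (-32) * μ0 ^ 2 * μ1 ^ 2 * μ3 + (-32) * μ0 ^ 2 * μ1 ^ 2 * μ2 + (16) * μ0 ^ 3 * μ2 * μ3 + (16) * μ0 ^ 3 * μ1 * μ3 + (16) * μ0 ^ 3 * μ1 * μ2 : ℂ) * hF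
end

section
/- Let f = x + z (a Laurent polynomial in x with parameter z), s, ν nonzero scalars with s ≠ ν, and let J₀ be the ideal of K[y, x, x⁻¹, z, ζ] generated by 1 − y(x+z), ν/s − yx, and ζ + sy. Then the quotient K[y, x, x⁻¹, z, ζ]/J₀ is isomorphic as a K[z,ζ]-module to K[z,ζ]/(zζ + s − ν). In particular it is a finitely generated (cyclic) K[z,ζ]-module, while K[y,x,x⁻¹,z]/(1 − y(x+z), ν/s − yx) is not finitely generated as a K[z]-module. -/
open MvPolynomial LaurentPolynomial

/-- The ring `K[y, x, x⁻¹, z, ζ]`: Laurent polynomials in `x` over `K[y, z, ζ]`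
(with `y = X 0`, `z = X 1`, `ζ = X 2`). -/
abbrev Stmt14.B (K : Type*) [Field K] := LaurentPolynomial (MvPolynomial (Fin 3) K)

/-- The ring `K[z, ζ]` (with `z = X 0`, `ζ = X 1`). -/
abbrev Stmt14.A (K : Type*) [Field K] := MvPolynomial (Fin 2) K

/-- The inclusion `K[z,ζ] → K[y,x,x⁻¹,z,ζ]`. -/
noncomputable def Stmt14.phi (K : Type*) [Field K] : Stmt14.A K →ₐ[K] Stmt14.B K :=
  MvPolynomial.aeval
    ![LaurentPolynomial.C (MvPolynomial.X 1), LaurentPolynomial.C (MvPolynomial.X 2)]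

noncomputable instance (K : Type*) [Field K] : Algebra (Stmt14.A K) (Stmt14.B K) :=
  (Stmt14.phi K).toRingHom.toAlgebra

/-- The ideal `J₀ = (1 − y(x+z), ν/s − yx, ζ + sy)` of `K[y,x,x⁻¹,z,ζ]`. -/
noncomputable def Stmt14.J0 (K : Type*) [Field K] (s ν : K) : Ideal (Stmt14.B K) :=
  Ideal.span
    { 1 - LaurentPolynomial.C (MvPolynomial.X 0) *
        (LaurentPolynomial.T 1 + LaurentPolynomial.C (MvPolynomial.X 1)),
      LaurentPolynomial.C (MvPolynomial.C (ν / s)) -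
        LaurentPolynomial.C (MvPolynomial.X 0) * LaurentPolynomial.T 1,
      LaurentPolynomial.C (MvPolynomial.X 2) +
        LaurentPolynomial.C (MvPolynomial.C s * MvPolynomial.X 0) }

/-- The ideal `(zζ + s − ν)` of `K[z,ζ]`. -/
noncomputable def Stmt14.I (K : Type*) [Field K] (s ν : K) : Ideal (Stmt14.A K) :=
  Ideal.span
    { MvPolynomial.X 0 * MvPolynomial.X 1 + MvPolynomial.C s - MvPolynomial.C ν }

/-- The ring `K[y, x, x⁻¹, z]` (with `y = X 0`, `z = X 1`). -/
abbrev Stmt14.B' (K : Type*) [Field K] := LaurentPolynomial (MvPolynomial (Fin 2) K)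

noncomputable instance (K : Type*) [Field K] : Algebra (Polynomial K) (Stmt14.B' K) :=
  ((Polynomial.aeval
    (LaurentPolynomial.C (MvPolynomial.X 1) : Stmt14.B' K)).toRingHom :
      Polynomial K →+* Stmt14.B' K).toAlgebra

/-- The ideal `(1 − y(x+z), ν/s − yx)` of `K[y,x,x⁻¹,z]`. -/
noncomputable def Stmt14.J0' (K : Type*) [Field K] (s ν : K) : Ideal (Stmt14.B' K) :=
  Ideal.span
    { 1 - LaurentPolynomial.C (MvPolynomial.X 0) *
        (LaurentPolynomial.T 1 + LaurentPolynomial.C (MvPolynomial.X 1)),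
      LaurentPolynomial.C (MvPolynomial.C (ν / s)) -
        LaurentPolynomial.C (MvPolynomial.X 0) * LaurentPolynomial.T 1 }

set_option maxHeartbeats 2000000 in
open Stmt14 in
theorem Stmt14.aux_part1 (K : Type*) [Field K] (s ν : K) (hs : s ≠ 0) (hν : ν ≠ 0)
    (hsν : s ≠ ν) :
    Nonempty ((Stmt14.B K ⧸ Stmt14.J0 K s ν) ≃ₗ[Stmt14.A K]
        (Stmt14.A K ⧸ Stmt14.I K s ν)) ∧
      Module.Finite (Stmt14.A K) (Stmt14.B K ⧸ Stmt14.J0 K s ν) := by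
  classical
  have hsub : s - ν ≠ 0 := sub_ne_zero.mpr hsν
  let mkI : A K →+* (A K ⧸ I K s ν) := Ideal.Quotient.mk _
  let mkJ : B K →+* (B K ⧸ J0 K s ν) := Ideal.Quotient.mk _
  -- generators of J0
  set g1 : B K := 1 - LaurentPolynomial.C (MvPolynomial.X 0) *
        (LaurentPolynomial.T 1 + LaurentPolynomial.C (MvPolynomial.X 1)) with hg1d
  set g2 : B K := LaurentPolynomial.C (MvPolynomial.C (ν / s)) -
        LaurentPolynomial.C (MvPolynomial.X 0) * LaurentPolynomial.T 1 with hg2d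
  set g3 : B K := LaurentPolynomial.C (MvPolynomial.X 2) +
        LaurentPolynomial.C (MvPolynomial.C s * MvPolynomial.X 0) with hg3d
  have hg1m : g1 ∈ J0 K s ν := Ideal.subset_span (by left; rfl)
  have hg2m : g2 ∈ J0 K s ν := Ideal.subset_span (by right; left; rfl)
  have hg3m : g3 ∈ J0 K s ν := Ideal.subset_span (by right; right; rfl)
  -- the map ψ : B → A/I
  let β : MvPolynomial (Fin 3) K →+* (A K ⧸ I K s ν) :=
    (aeval ![mkI (MvPolynomial.C (-s⁻¹) * MvPolynomial.X 1), mkI (MvPolynomial.X 0),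
      mkI (MvPolynomial.X 1)]).toRingHom
  let u : A K ⧸ I K s ν := mkI (MvPolynomial.C (ν/(s-ν)) * MvPolynomial.X 0)
  have hgen : mkI (MvPolynomial.X 0 * MvPolynomial.X 1 + MvPolynomial.C s
      - MvPolynomial.C ν) = 0 := by
    rw [Ideal.Quotient.eq_zero_iff_mem]; exact Ideal.subset_span rfl
  -- mkI (X0 * X1) = mkI (C (ν - s))
  have hzz : mkI (MvPolynomial.X 0 * MvPolynomial.X 1) = mkI (MvPolynomial.C (ν - s)) := by
    rw [Ideal.Quotient.mk_eq_mk_iff_sub_mem]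
    refine Ideal.mem_span_singleton'.mpr ⟨1, ?_⟩
    rw [map_sub]
    ring
  have hu : IsUnit u := by
    refine IsUnit.of_mul_eq_one (mkI (MvPolynomial.C (-ν⁻¹) * MvPolynomial.X 1)) ?_
    show mkI _ * mkI _ = 1
    rw [← map_mul, show ((MvPolynomial.C (ν/(s-ν)) * MvPolynomial.X 0) *
      (MvPolynomial.C (-ν⁻¹) * MvPolynomial.X 1) : A K) =
      MvPolynomial.C (ν/(s-ν) * -ν⁻¹) * (MvPolynomial.X 0 * MvPolynomial.X 1) from by
        rw [MvPolynomial.C_mul]; ring]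
    rw [map_mul, hzz, ← map_mul, ← MvPolynomial.C_mul, ← map_one mkI]
    congr 1
    rw [show (ν/(s-ν) * -ν⁻¹ * (ν - s)) = 1 from by field_simp; ring]
    exact MvPolynomial.C_1 (R := K) (σ := Fin 2)
  -- the lifted map ψ : B K → A K ⧸ I K s ν
  let χ : Polynomial (MvPolynomial (Fin 3) K) →+* (A K ⧸ I K s ν) :=
    Polynomial.eval₂RingHom β u
  have hχ : ∀ (y : Submonoid.powers (Polynomial.X : Polynomial (MvPolynomial (Fin 3) K))),
      IsUnit (χ y) := by
    rintro ⟨y, n, rfl⟩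
    simpa [χ] using hu.pow n
  haveI := LaurentPolynomial.isLocalization (R := MvPolynomial (Fin 3) K)
  let ψ : B K →+* (A K ⧸ I K s ν) :=
    IsLocalization.lift
      (M := Submonoid.powers (Polynomial.X : Polynomial (MvPolynomial (Fin 3) K))) hχ
  have hψC : ∀ r : MvPolynomial (Fin 3) K, ψ (LaurentPolynomial.C r) = β r := by
    intro r
    have h : (LaurentPolynomial.C r : B K) =
        algebraMap (Polynomial (MvPolynomial (Fin 3) K)) _ (Polynomial.C r) := by
      rw [LaurentPolynomial.algebraMap_eq_toLaurent, Polynomial.toLaurent_C]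
    rw [h, IsLocalization.lift_eq]; simp [χ]
  have hψT : ψ (LaurentPolynomial.T 1) = u := by
    have h : (LaurentPolynomial.T 1 : B K) =
        algebraMap (Polynomial (MvPolynomial (Fin 3) K)) _ Polynomial.X := by
      rw [LaurentPolynomial.algebraMap_eq_toLaurent, Polynomial.toLaurent_X]
    rw [h, IsLocalization.lift_eq]; simp [χ]
  have hβ0 : β (MvPolynomial.X 0) = mkI (MvPolynomial.C (-s⁻¹) * MvPolynomial.X 1) := by
    simp only [β, AlgHom.toRingHom_eq_coe, RingHom.coe_coe, aeval_X, Matrix.cons_val_zero]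
  have hβ1 : β (MvPolynomial.X 1) = mkI (MvPolynomial.X 0) := by
    simp only [β, AlgHom.toRingHom_eq_coe, RingHom.coe_coe, aeval_X, Matrix.cons_val_one,
      Matrix.head_cons, Matrix.cons_val_zero]
  have hβ2 : β (MvPolynomial.X 2) = mkI (MvPolynomial.X 1) := by
    simp only [β, AlgHom.toRingHom_eq_coe, RingHom.coe_coe, aeval_X]
    rfl
  have hβC : ∀ k : K, β (MvPolynomial.C k) = mkI (MvPolynomial.C k) := by
    intro k
    simp only [β, AlgHom.toRingHom_eq_coe, RingHom.coe_coe, aeval_C]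
    rw [← Ideal.Quotient.mk_algebraMap, MvPolynomial.algebraMap_eq]
  -- ψ kills the three generators
  have hψg1 : ψ g1 = 0 := by
    rw [hg1d, map_sub, map_one, map_mul, map_add, hψT, hψC, hψC, hβ0, hβ1]
    show (1 : A K ⧸ I K s ν) - mkI _ * (mkI _ + mkI _) = 0
    rw [← map_add, ← map_mul, ← map_one mkI, ← map_sub, Ideal.Quotient.eq_zero_iff_mem]
    refine Ideal.mem_span_singleton'.mpr ⟨MvPolynomial.C ((s-ν)⁻¹), ?_⟩
    have hA : (MvPolynomial.C ((s-ν)⁻¹) : A K) + MvPolynomial.C (-s⁻¹) *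
        MvPolynomial.C (ν/(s-ν)) + MvPolynomial.C (-s⁻¹) = 0 := by
      rw [← MvPolynomial.C_mul, ← MvPolynomial.C_add, ← MvPolynomial.C_add]
      rw [show ((s-ν)⁻¹ + -s⁻¹ * (ν/(s-ν)) + -s⁻¹ : K) = 0 from by field_simp; ring]
      exact MvPolynomial.C_0
    have hB : (MvPolynomial.C ((s-ν)⁻¹) : A K) * MvPolynomial.C s -
        MvPolynomial.C ((s-ν)⁻¹) * MvPolynomial.C ν - 1 = 0 := by
      rw [← MvPolynomial.C_mul, ← MvPolynomial.C_mul, ← MvPolynomial.C_sub,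
        ← MvPolynomial.C_1 (R := K) (σ := Fin 2), ← MvPolynomial.C_sub]
      rw [show ((s-ν)⁻¹ * s - (s-ν)⁻¹ * ν - 1 : K) = 0 from by first | (field_simp; ring) | field_simp]
      exact MvPolynomial.C_0
    linear_combination (MvPolynomial.X 0 * MvPolynomial.X 1 : A K) * hA + hB
  have hψg2 : ψ g2 = 0 := by
    rw [hg2d, map_sub, map_mul, hψT, hψC, hψC, hβ0, hβC]
    show mkI _ - mkI _ * u = 0
    rw [← map_mul, ← map_sub, Ideal.Quotient.eq_zero_iff_mem]
    refine Ideal.mem_span_singleton'.mpr ⟨MvPolynomial.C (ν/(s*(s-ν))), ?_⟩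
    have hA : (MvPolynomial.C (ν/(s*(s-ν))) : A K) + MvPolynomial.C (-s⁻¹) *
        MvPolynomial.C (ν/(s-ν)) = 0 := by
      rw [← MvPolynomial.C_mul, ← MvPolynomial.C_add]
      rw [show (ν/(s*(s-ν)) + -s⁻¹ * (ν/(s-ν)) : K) = 0 from by field_simp; ring]
      exact MvPolynomial.C_0
    have hB : (MvPolynomial.C (ν/(s*(s-ν))) : A K) * MvPolynomial.C s -
        MvPolynomial.C (ν/(s*(s-ν))) * MvPolynomial.C ν - MvPolynomial.C (ν/s) = 0 := by
      rw [← MvPolynomial.C_mul, ← MvPolynomial.C_mul, ← MvPolynomial.C_sub,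
        ← MvPolynomial.C_sub]
      rw [show (ν/(s*(s-ν)) * s - ν/(s*(s-ν)) * ν - ν/s : K) = 0 from by field_simp; ring]
      exact MvPolynomial.C_0
    linear_combination (MvPolynomial.X 0 * MvPolynomial.X 1 : A K) * hA + hB
  have hψg3 : ψ g3 = 0 := by
    rw [hg3d, map_add, hψC, hψC, hβ2]
    have h : (MvPolynomial.C s * MvPolynomial.X 0 : MvPolynomial (Fin 3) K) =
        MvPolynomial.C s * MvPolynomial.X 0 := rfl
    rw [show β (MvPolynomial.C s * MvPolynomial.X 0) =
      mkI (MvPolynomial.C s) * mkI (MvPolynomial.C (-s⁻¹) * MvPolynomial.X 1) from by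
        rw [map_mul, hβC, hβ0]]
    rw [← map_mul, ← map_add, Ideal.Quotient.eq_zero_iff_mem]
    refine Ideal.mem_span_singleton'.mpr ⟨0, ?_⟩
    have hA : (MvPolynomial.C s : A K) * MvPolynomial.C (-s⁻¹) + 1 = 0 := by
      rw [← MvPolynomial.C_mul, ← MvPolynomial.C_1 (R := K) (σ := Fin 2),
        ← MvPolynomial.C_add]
      rw [show (s * -s⁻¹ + 1 : K) = 0 from by field_simp; ring]
      exact MvPolynomial.C_0
    linear_combination (-(MvPolynomial.X 1) : A K) * hA
  -- descend ψ to e : B/J0 → A/I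
  have hker : ∀ b ∈ J0 K s ν, ψ b = 0 := by
    have hle : Ideal.span {g1, g2, g3} ≤ RingHom.ker ψ := by
      rw [Ideal.span_le]
      rintro g (rfl | rfl | rfl)
      · exact hψg1
      · exact hψg2
      · exact hψg3
    intro b hb
    exact hle hb
  let e : (B K ⧸ J0 K s ν) →+* (A K ⧸ I K s ν) := Ideal.Quotient.lift (J0 K s ν) ψ hker
  have he : ∀ b : B K, e (mkJ b) = ψ b := fun b => Ideal.Quotient.lift_mk _ _ _
  -- the map f0 : A → B/J0
  let f0 : A K →+* (B K ⧸ J0 K s ν) := mkJ.comp ((phi K) : A K →ₐ[K] B K).toRingHom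
  have hphi0 : phi K (MvPolynomial.X 0) = LaurentPolynomial.C (MvPolynomial.X 1) := by
    simp only [phi, aeval_X, Matrix.cons_val_zero]
  have hphi1 : phi K (MvPolynomial.X 1) = LaurentPolynomial.C (MvPolynomial.X 2) := by
    simp only [phi, aeval_X, Matrix.cons_val_one, Matrix.head_cons, Matrix.cons_val_zero]
  have hphiC : ∀ k : K, phi K (MvPolynomial.C k) = LaurentPolynomial.C (MvPolynomial.C k) := by
    intro k
    simp only [phi, aeval_C]
    rfl
  -- phi maps the generator of I into J0
  have hphigen : phi K (MvPolynomial.X 0 * MvPolynomial.X 1 + MvPolynomial.C s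
      - MvPolynomial.C ν) ∈ J0 K s ν := by
    rw [map_sub, map_add, map_mul, hphi0, hphi1, hphiC, hphiC]
    have hA : (LaurentPolynomial.C (MvPolynomial.C s) : B K) *
        LaurentPolynomial.C (MvPolynomial.C (ν/s)) =
        LaurentPolynomial.C (MvPolynomial.C ν) := by
      rw [← map_mul, ← MvPolynomial.C_mul, show (s * (ν/s) : K) = ν from by field_simp]
    have hB : (LaurentPolynomial.C (MvPolynomial.C s * MvPolynomial.X 0) : B K) =
        LaurentPolynomial.C (MvPolynomial.C s) * LaurentPolynomial.C (MvPolynomial.X 0) :=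
      map_mul _ _ _
    have heq : (LaurentPolynomial.C (MvPolynomial.X 1) : B K) *
        LaurentPolynomial.C (MvPolynomial.X 2) +
        LaurentPolynomial.C (MvPolynomial.C s) - LaurentPolynomial.C (MvPolynomial.C ν) =
        LaurentPolynomial.C (MvPolynomial.C s) * g1 -
          LaurentPolynomial.C (MvPolynomial.C s) * g2 +
          LaurentPolynomial.C (MvPolynomial.X 1) * g3 := by
      rw [hg1d, hg2d, hg3d, hB]
      linear_combination hA
    rw [heq]
    exact add_mem (sub_mem (Ideal.mul_mem_left _ _ hg1m) (Ideal.mul_mem_left _ _ hg2m))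
      (Ideal.mul_mem_left _ _ hg3m)
  have hmemI : ∀ a ∈ I K s ν, f0 a = 0 := by
    intro a ha
    obtain ⟨c, hc⟩ := Ideal.mem_span_singleton'.mp ha
    rw [← hc, map_mul]
    have : f0 (MvPolynomial.X 0 * MvPolynomial.X 1 + MvPolynomial.C s - MvPolynomial.C ν)
        = 0 := by
      show mkJ _ = 0
      rw [Ideal.Quotient.eq_zero_iff_mem]
      exact hphigen
    rw [this]
    exact mul_zero (f0 c)
  let e' : (A K ⧸ I K s ν) →+* (B K ⧸ J0 K s ν) := Ideal.Quotient.lift (I K s ν) f0 hmemI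
  have he' : ∀ a : A K, e' (mkI a) = mkJ (phi K a) := fun a => Ideal.Quotient.lift_mk _ _ _
  -- first composition identity : e ∘ mkJ ∘ phi = mkI
  have h_ef : ∀ a : A K, e (mkJ (phi K a)) = mkI a := by
    have : (e.comp (mkJ.comp ((phi K) : A K →ₐ[K] B K).toRingHom)) = mkI := by
      apply MvPolynomial.ringHom_ext
      · intro k
        simp only [RingHom.comp_apply, AlgHom.toRingHom_eq_coe, RingHom.coe_coe]
        rw [hphiC, he, hψC, hβC]
      · intro i
        fin_cases i
        · show e (mkJ (phi K (MvPolynomial.X 0))) = mkI (MvPolynomial.X 0)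
          rw [hphi0, he, hψC, hβ1]
        · show e (mkJ (phi K (MvPolynomial.X 1))) = mkI (MvPolynomial.X 1)
          rw [hphi1, he, hψC, hβ2]
    intro a
    have := DFunLike.congr_fun this a
    simpa using this
  -- second composition identity on B/J0
  have h_fe : ∀ b : B K ⧸ J0 K s ν, e' (e b) = b := by
    have hcomp : ((e'.comp e).comp mkJ) = mkJ := by
      apply IsLocalization.ringHom_ext
        (M := Submonoid.powers (Polynomial.X : Polynomial (MvPolynomial (Fin 3) K)))
      apply Polynomial.ringHom_ext
      · intro r
        simp only [RingHom.comp_apply]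
        rw [LaurentPolynomial.algebraMap_eq_toLaurent, Polynomial.toLaurent_C]
        -- now show e' (e (mkJ (LC r))) = mkJ (LC r) for all r, by another ext
        have hr : ((e'.comp e).comp (mkJ.comp (LaurentPolynomial.C))) =
            mkJ.comp (LaurentPolynomial.C) := by
          apply MvPolynomial.ringHom_ext
          · intro k
            simp only [RingHom.comp_apply]
            rw [he, hψC, hβC, he', hphiC]
          · intro i
            fin_cases i
            · -- X 0 : y
              show e' (e (mkJ (LaurentPolynomial.C (MvPolynomial.X 0)))) =
                mkJ (LaurentPolynomial.C (MvPolynomial.X 0))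
              rw [he, hψC, hβ0, he', map_mul, hphiC, hphi1]
              rw [Ideal.Quotient.mk_eq_mk_iff_sub_mem]
              have hAA : (LaurentPolynomial.C (MvPolynomial.C (-s⁻¹)) : B K) *
                  LaurentPolynomial.C (MvPolynomial.C s) = -1 := by
                rw [← map_mul, ← MvPolynomial.C_mul,
                  show (-s⁻¹ * s : K) = -1 from by field_simp]
                simp
              have : (LaurentPolynomial.C (MvPolynomial.C (-s⁻¹)) : B K) *
                  LaurentPolynomial.C (MvPolynomial.X 2) - LaurentPolynomial.C (MvPolynomial.X 0)
                  = LaurentPolynomial.C (MvPolynomial.C (-s⁻¹)) * g3 := by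
                rw [hg3d, map_mul]
                linear_combination (-(LaurentPolynomial.C (MvPolynomial.X 0 : MvPolynomial (Fin 3) K)) : B K) * hAA
              rw [this]
              exact Ideal.mul_mem_left _ _ hg3m
            · -- X 1 : z
              show e' (e (mkJ (LaurentPolynomial.C (MvPolynomial.X 1)))) =
                mkJ (LaurentPolynomial.C (MvPolynomial.X 1))
              rw [he, hψC, hβ1, he', hphi0]
            · -- X 2 : ζ
              show e' (e (mkJ (LaurentPolynomial.C (MvPolynomial.X 2)))) =
                mkJ (LaurentPolynomial.C (MvPolynomial.X 2))
              rw [he, hψC, hβ2, he', hphi1]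
        exact DFunLike.congr_fun hr r
      · simp only [RingHom.comp_apply]
        rw [LaurentPolynomial.algebraMap_eq_toLaurent, Polynomial.toLaurent_X]
        rw [he, hψT]
        show e' (mkI _) = _
        rw [he', map_mul, hphiC, hphi0]
        rw [Ideal.Quotient.mk_eq_mk_iff_sub_mem]
        have h₁ : (LaurentPolynomial.C (MvPolynomial.C (1 + ν/(s-ν))) : B K) *
            LaurentPolynomial.C (MvPolynomial.C (ν/s)) =
            LaurentPolynomial.C (MvPolynomial.C (ν/(s-ν))) := by
          rw [← map_mul, ← MvPolynomial.C_mul,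
            show ((1 + ν/(s-ν)) * (ν/s) : K) = ν/(s-ν) from by field_simp; ring]
        have h₂ : (LaurentPolynomial.C (MvPolynomial.C (1 + ν/(s-ν))) : B K) -
            LaurentPolynomial.C (MvPolynomial.C (ν/(s-ν))) = 1 := by
          rw [← map_sub, ← MvPolynomial.C_sub,
            show ((1 + ν/(s-ν)) - ν/(s-ν) : K) = 1 from by ring]
          simp
        have : (LaurentPolynomial.C (MvPolynomial.C (ν/(s-ν))) : B K) *
            LaurentPolynomial.C (MvPolynomial.X 1) - LaurentPolynomial.T 1
            = -((LaurentPolynomial.C (MvPolynomial.C (1 + ν/(s-ν))) * LaurentPolynomial.T 1) * g1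
              - (LaurentPolynomial.C (MvPolynomial.C (1 + ν/(s-ν))) *
                (LaurentPolynomial.T 1 + LaurentPolynomial.C (MvPolynomial.X 1))) * g2) := by
          rw [hg1d, hg2d]
          linear_combination (-(LaurentPolynomial.T 1) : B K) * h₁ +
            (LaurentPolynomial.T 1 : B K) * h₂ - (LaurentPolynomial.C (MvPolynomial.X 1)) * h₁
        rw [this]
        exact neg_mem (sub_mem (Ideal.mul_mem_left _ _ hg1m) (Ideal.mul_mem_left _ _ hg2m))
    intro b
    obtain ⟨b0, rfl⟩ := Ideal.Quotient.mk_surjective b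
    exact DFunLike.congr_fun hcomp b0
  have h_ef' : ∀ q : A K ⧸ I K s ν, e (e' q) = q := by
    intro q
    obtain ⟨a, rfl⟩ := Ideal.Quotient.mk_surjective q
    rw [he', h_ef]
  -- smul compatibility
  have hsmulJ : ∀ (a : A K) (b : B K), a • mkJ b = mkJ (phi K a * b) := fun a b => rfl
  have hsmulI : ∀ (a : A K) (q : A K ⧸ I K s ν), a • q = mkI a * q := by
    intro a q
    obtain ⟨x, rfl⟩ := Ideal.Quotient.mk_surjective q
    show _ = mkI a * mkI x
    rw [← map_mul]
    rfl
  have hmapsmul : ∀ (a : A K) (m : B K ⧸ J0 K s ν), e (a • m) = a • e m := by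
    intro a m
    obtain ⟨b, rfl⟩ := Ideal.Quotient.mk_surjective m
    calc e (a • mkJ b) = ψ (phi K a) * ψ b := by rw [hsmulJ, he, map_mul]
      _ = mkI a * ψ b := by rw [← he, h_ef]
      _ = a • e (mkJ b) := by rw [he, ← hsmulI]
  -- assemble the linear equivalence
  let L : (B K ⧸ J0 K s ν) ≃ₗ[A K] (A K ⧸ I K s ν) :=
    { toFun := e
      map_add' := map_add e
      map_smul' := hmapsmul
      invFun := e'
      left_inv := h_fe
      right_inv := h_ef' }
  refine ⟨⟨L⟩, ?_⟩
  haveI : Module.Finite (A K) (A K ⧸ I K s ν) := inferInstance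
  exact Module.Finite.equiv L.symm


set_option maxHeartbeats 2000000 in
theorem Stmt14.aux_part3 (K : Type*) [Field K] (s ν : K) (hs : s ≠ 0) (hν : ν ≠ 0)
    (hsν : s ≠ ν) :
    ¬ Module.Finite (Polynomial K) (Stmt14.B' K ⧸ Stmt14.J0' K s ν) := by
  classical
  intro hfin
  have hsub : s - ν ≠ 0 := sub_ne_zero.mpr hsν
  have ha : (s - ν)/s ≠ 0 := div_ne_zero hsub hs
  let β : MvPolynomial (Fin 2) K →+* LaurentPolynomial K :=
    (aeval ![LaurentPolynomial.C ((s - ν)/s) * LaurentPolynomial.T (-1),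
      LaurentPolynomial.T 1]).toRingHom
  let u : LaurentPolynomial K := LaurentPolynomial.C (ν/(s - ν)) * LaurentPolynomial.T 1
  have hTT : (LaurentPolynomial.T (-1) : LaurentPolynomial K) * LaurentPolynomial.T 1 = 1 := by
    rw [← LaurentPolynomial.T_add]; norm_num
  have hu : IsUnit u := by
    refine IsUnit.of_mul_eq_one (LaurentPolynomial.C (ν/(s - ν))⁻¹ * LaurentPolynomial.T (-1)) ?_
    have hcne : ν/(s - ν) ≠ 0 := div_ne_zero hν hsub
    calc u * (LaurentPolynomial.C (ν/(s - ν))⁻¹ * LaurentPolynomial.T (-1))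
        = (LaurentPolynomial.C (ν/(s - ν)) * LaurentPolynomial.C (ν/(s - ν))⁻¹) *
          (LaurentPolynomial.T (-1) * LaurentPolynomial.T 1) := by ring
      _ = 1 := by rw [hTT, ← map_mul, mul_inv_cancel₀ hcne, map_one, one_mul]
  let χ : Polynomial (MvPolynomial (Fin 2) K) →+* LaurentPolynomial K :=
    Polynomial.eval₂RingHom β u
  have hχ : ∀ (y : Submonoid.powers (Polynomial.X : Polynomial (MvPolynomial (Fin 2) K))),
      IsUnit (χ y) := by
    rintro ⟨y, n, rfl⟩
    simpa [χ] using hu.pow n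
  haveI := LaurentPolynomial.isLocalization (R := MvPolynomial (Fin 2) K)
  let ψ : Stmt14.B' K →+* LaurentPolynomial K :=
    IsLocalization.lift (M := Submonoid.powers (Polynomial.X : Polynomial (MvPolynomial (Fin 2) K))) hχ
  have hψC : ∀ r : MvPolynomial (Fin 2) K, ψ (LaurentPolynomial.C r) = β r := by
    intro r
    have h : (LaurentPolynomial.C r : Stmt14.B' K) =
        algebraMap (Polynomial (MvPolynomial (Fin 2) K)) _ (Polynomial.C r) := by
      rw [LaurentPolynomial.algebraMap_eq_toLaurent, Polynomial.toLaurent_C]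
    rw [h, IsLocalization.lift_eq]; simp [χ]
  have hψT : ψ (LaurentPolynomial.T 1) = u := by
    have h : (LaurentPolynomial.T 1 : Stmt14.B' K) =
        algebraMap (Polynomial (MvPolynomial (Fin 2) K)) _ Polynomial.X := by
      rw [LaurentPolynomial.algebraMap_eq_toLaurent, Polynomial.toLaurent_X]
    rw [h, IsLocalization.lift_eq]; simp [χ]
  have hβ0 : β (X 0) = LaurentPolynomial.C ((s - ν)/s) * LaurentPolynomial.T (-1) := by
    simp only [β, AlgHom.toRingHom_eq_coe, RingHom.coe_coe, aeval_X, Matrix.cons_val_zero]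
  have hβ1 : β (X 1) = LaurentPolynomial.T 1 := by
    simp only [β, AlgHom.toRingHom_eq_coe, RingHom.coe_coe, aeval_X, Matrix.cons_val_one,
      Matrix.head_cons, Matrix.cons_val_zero]
  have hβC : ∀ k : K, β (MvPolynomial.C k) = LaurentPolynomial.C k := by
    intro k
    simp only [β, AlgHom.toRingHom_eq_coe, RingHom.coe_coe, aeval_C,
      ← LaurentPolynomial.C_eq_algebraMap]
  -- ψ kills the generators
  have hg1 : ψ (1 - LaurentPolynomial.C (X 0) *
      (LaurentPolynomial.T 1 + LaurentPolynomial.C (X 1))) = 0 := by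
    rw [map_sub, map_one, map_mul, map_add, hψT, hψC, hψC, hβ0, hβ1]
    have h1 : (LaurentPolynomial.C ((s - ν)/s) : LaurentPolynomial K) *
        LaurentPolynomial.C (ν/(s - ν)) + LaurentPolynomial.C ((s - ν)/s) = 1 := by
      rw [← map_mul, ← map_add, show (s - ν)/s * (ν/(s - ν)) + (s - ν)/s = 1 from by
        field_simp; ring, map_one]
    calc (1 : LaurentPolynomial K) - LaurentPolynomial.C ((s - ν)/s) * LaurentPolynomial.T (-1) *
          (LaurentPolynomial.C (ν/(s - ν)) * LaurentPolynomial.T 1 + LaurentPolynomial.T 1)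
        = 1 - (LaurentPolynomial.C ((s - ν)/s) * LaurentPolynomial.C (ν/(s - ν)) +
            LaurentPolynomial.C ((s - ν)/s)) *
            (LaurentPolynomial.T (-1) * LaurentPolynomial.T 1) := by ring
      _ = 0 := by rw [hTT, h1]; ring
  have hg2 : ψ (LaurentPolynomial.C (MvPolynomial.C (ν / s)) -
      LaurentPolynomial.C (X 0) * LaurentPolynomial.T 1) = 0 := by
    rw [map_sub, map_mul, hψT, hψC, hψC, hβ0, hβC]
    have h1 : (LaurentPolynomial.C ((s - ν)/s) : LaurentPolynomial K) *
        LaurentPolynomial.C (ν/(s - ν)) = LaurentPolynomial.C (ν/s) := by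
      rw [← map_mul, show (s - ν)/s * (ν/(s - ν)) = ν/s from by field_simp]
    calc (LaurentPolynomial.C (ν/s) : LaurentPolynomial K) - LaurentPolynomial.C ((s - ν)/s) *
          LaurentPolynomial.T (-1) *
          (LaurentPolynomial.C (ν/(s - ν)) * LaurentPolynomial.T 1)
        = LaurentPolynomial.C (ν/s) -
            (LaurentPolynomial.C ((s - ν)/s) * LaurentPolynomial.C (ν/(s - ν))) *
            (LaurentPolynomial.T (-1) * LaurentPolynomial.T 1) := by ring
      _ = 0 := by rw [hTT, h1]; ring
  -- map to RatFunc K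
  have hXunit : ∀ (y : Submonoid.powers (Polynomial.X : Polynomial K)),
      IsUnit (algebraMap (Polynomial K) (RatFunc K) y) := by
    rintro ⟨y, n, rfl⟩
    refine (isUnit_iff_ne_zero).mpr ?_
    simp only [map_pow]
    refine pow_ne_zero _ ?_
    simpa using (map_ne_zero_iff _ (IsFractionRing.injective (Polynomial K) (RatFunc K))).mpr
      (Polynomial.X_ne_zero)
  haveI := LaurentPolynomial.isLocalization (R := K)
  let ℓ : LaurentPolynomial K →+* RatFunc K :=
    IsLocalization.lift (M := Submonoid.powers (Polynomial.X : Polynomial K)) hXunit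
  have hℓC : ∀ k : K, ℓ (LaurentPolynomial.C k) = algebraMap (Polynomial K) (RatFunc K)
      (Polynomial.C k) := by
    intro k
    have h : (LaurentPolynomial.C k : LaurentPolynomial K) =
        algebraMap (Polynomial K) _ (Polynomial.C k) := by
      rw [LaurentPolynomial.algebraMap_eq_toLaurent, Polynomial.toLaurent_C]
    rw [h, IsLocalization.lift_eq]
  have hℓT : ℓ (LaurentPolynomial.T 1) = algebraMap (Polynomial K) (RatFunc K) Polynomial.X := by
    have h : (LaurentPolynomial.T 1 : LaurentPolynomial K) =
        algebraMap (Polynomial K) _ Polynomial.X := by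
      rw [LaurentPolynomial.algebraMap_eq_toLaurent, Polynomial.toLaurent_X]
    rw [h, IsLocalization.lift_eq]
  -- descend to the quotient
  let ρ0 : Stmt14.B' K →+* RatFunc K := ℓ.comp ψ
  have hker : ∀ b ∈ Stmt14.J0' K s ν, ρ0 b = 0 := by
    intro b hb
    rw [Stmt14.J0'] at hb
    have hle : Ideal.span {1 - LaurentPolynomial.C (MvPolynomial.X 0) *
        (LaurentPolynomial.T 1 + LaurentPolynomial.C (MvPolynomial.X 1)),
        LaurentPolynomial.C (MvPolynomial.C (ν / s)) -
        LaurentPolynomial.C (MvPolynomial.X 0) * LaurentPolynomial.T 1} ≤ RingHom.ker ρ0 := by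
      rw [Ideal.span_le]
      rintro g (rfl | rfl)
      · simp only [SetLike.mem_coe, RingHom.mem_ker, ρ0, RingHom.comp_apply, hg1, map_zero]
      · simp only [SetLike.mem_coe, RingHom.mem_ker, ρ0, RingHom.comp_apply, hg2, map_zero]
    exact hle hb
  let ρ : Stmt14.B' K ⧸ Stmt14.J0' K s ν →+* RatFunc K := Ideal.Quotient.lift (Stmt14.J0' K s ν) ρ0 hker
  -- algebra compatibility
  have hcomm : ∀ p : Polynomial K,
      ρ (@algebraMap (Polynomial K) (Stmt14.B' K ⧸ Stmt14.J0' K s ν) _ _ (Ideal.Quotient.algebra _) p) =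
        algebraMap (Polynomial K) (RatFunc K) p := by
    intro p
    have : ρ.comp ((Ideal.Quotient.mk (Stmt14.J0' K s ν)).comp (algebraMap (Polynomial K) (Stmt14.B' K))) =
        algebraMap (Polynomial K) (RatFunc K) := by
      apply Polynomial.ringHom_ext
      · intro k
        have h1 : algebraMap (Polynomial K) (Stmt14.B' K) (Polynomial.C k) =
            LaurentPolynomial.C (MvPolynomial.C k) := by
          show Polynomial.aeval _ (Polynomial.C k) = _
          rw [Polynomial.aeval_C]
          rfl
        simp only [RingHom.comp_apply, h1, ρ, Ideal.Quotient.lift_mk, ρ0, RingHom.comp_apply,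
          hψC, hβC, hℓC]
      · have h1 : algebraMap (Polynomial K) (Stmt14.B' K) Polynomial.X =
            LaurentPolynomial.C (MvPolynomial.X 1) := by
          show Polynomial.aeval _ Polynomial.X = _
          rw [Polynomial.aeval_X]
        simp only [RingHom.comp_apply, h1, ρ, Ideal.Quotient.lift_mk, ρ0, RingHom.comp_apply,
          hψC, hβ1, hℓT]
    calc ρ (algebraMap (Polynomial K) (Stmt14.B' K ⧸ Stmt14.J0' K s ν) p)
        = ρ (Ideal.Quotient.mk (Stmt14.J0' K s ν) (algebraMap (Polynomial K) (Stmt14.B' K) p)) := by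
          rw [Ideal.Quotient.mk_algebraMap]
      _ = algebraMap (Polynomial K) (RatFunc K) p := by
          simpa using DFunLike.congr_fun this p
  -- the element y is integral; push it to RatFunc
  obtain ⟨p, hpmonic, hproot⟩ :=
    IsIntegral.of_finite (Polynomial K)
      (Ideal.Quotient.mk (Stmt14.J0' K s ν) (LaurentPolynomial.C (MvPolynomial.X 0)))
  have hmap : Polynomial.eval₂ (algebraMap (Polynomial K) (RatFunc K))
      (ρ (Ideal.Quotient.mk (Stmt14.J0' K s ν) (LaurentPolynomial.C (MvPolynomial.X 0)))) p = 0 := by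
    have := congrArg ρ hproot
    rw [Polynomial.hom_eval₂, map_zero] at this
    rw [← this]
    congr 1
    exact RingHom.ext fun x => ((hcomm x).symm.trans (RingHom.comp_apply _ _ _).symm)
  have hval : ρ (Ideal.Quotient.mk (Stmt14.J0' K s ν) (LaurentPolynomial.C (MvPolynomial.X 0))) =
      algebraMap (Polynomial K) (RatFunc K) (Polynomial.C ((s - ν)/s)) * ℓ (LaurentPolynomial.T (-1)) := by
    simp only [ρ, Ideal.Quotient.lift_mk, ρ0, RingHom.comp_apply, hψC, hβ0, map_mul, hℓC]
  have hinv : ℓ (LaurentPolynomial.T (-1)) *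
      algebraMap (Polynomial K) (RatFunc K) Polynomial.X = 1 := by
    rw [← hℓT, ← map_mul, hTT, map_one]
  -- X⁻¹ is integral over K[X]
  have hintegral : IsIntegral (Polynomial K) (ℓ (LaurentPolynomial.T (-1))) := by
    have h1 : IsIntegral (Polynomial K)
        (ρ (Ideal.Quotient.mk (Stmt14.J0' K s ν) (LaurentPolynomial.C (MvPolynomial.X 0)))) :=
      ⟨p, hpmonic, hmap⟩
    have h2 : IsIntegral (Polynomial K)
        (algebraMap (Polynomial K) (RatFunc K) (Polynomial.C (((s - ν)/s)⁻¹))) :=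
      isIntegral_algebraMap
    have h3 : ℓ (LaurentPolynomial.T (-1)) =
        algebraMap (Polynomial K) (RatFunc K) (Polynomial.C (((s - ν)/s)⁻¹)) *
          (algebraMap (Polynomial K) (RatFunc K) (Polynomial.C ((s - ν)/s)) *
            ℓ (LaurentPolynomial.T (-1))) := by
      rw [← mul_assoc, ← map_mul, ← Polynomial.C_mul, inv_mul_cancel₀ ha, Polynomial.C_1,
        map_one, one_mul]
    rw [h3, ← hval]
    exact h2.mul h1
  obtain ⟨q, hq⟩ := IsIntegrallyClosed.isIntegral_iff.mp hintegral
  have : q * Polynomial.X = 1 := by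
    apply IsFractionRing.injective (Polynomial K) (RatFunc K)
    rw [map_mul, map_one, hq, hinv]
  exact Polynomial.not_isUnit_X (IsUnit.of_mul_eq_one _ (by rw [mul_comm] at this; exact this))



/-- For `f = x + z`, `s, ν` nonzero with `s ≠ ν`, the quotient
`K[y,x,x⁻¹,z,ζ] / (1 − y(x+z), ν/s − yx, ζ + sy)` is isomorphic as a `K[z,ζ]`-module to
`K[z,ζ]/(zζ + s − ν)`; in particular it is a finitely generated (cyclic)
`K[z,ζ]`-module, while `K[y,x,x⁻¹,z]/(1 − y(x+z), ν/s − yx)` is not finitely generated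
as a `K[z]`-module. -/
theorem stmt_14 (K : Type*) [Field K] (s ν : K) (hs : s ≠ 0) (hν : ν ≠ 0)
    (hsν : s ≠ ν) :
    Nonempty ((Stmt14.B K ⧸ Stmt14.J0 K s ν) ≃ₗ[Stmt14.A K]
        (Stmt14.A K ⧸ Stmt14.I K s ν)) ∧
      Module.Finite (Stmt14.A K) (Stmt14.B K ⧸ Stmt14.J0 K s ν) ∧
      ¬ Module.Finite (Polynomial K) (Stmt14.B' K ⧸ Stmt14.J0' K s ν) := by
  obtain ⟨h1, h2⟩ := Stmt14.aux_part1 K s ν hs hν hsν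
  exact ⟨h1, h2, Stmt14.aux_part3 K s ν hs hν hsν⟩
end
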